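/- Fix c ∈ ℝ. For μ ∈ (0,1), let K_{μ,c}(v,u) = ½|u|² + 2|v|²⟨u, iv⟩ − μ·Im(uv) − (1−μ)/2 − μ|v|²/|2v²−1| + c|v|², defined for (v,u) ∈ ℂ² with 2v² ≠ 1, and define the rescaled Hamiltonian K̂_{μ,c}(v̂,û) = (1/(1−μ)) · K_{μ,c}(√(1−μ)·v̂, √(1−μ)·û). Then, as μ → 1⁻, K̂_{μ,c} converges uniformly on every compact subset of ℂ² to the function F(v̂,û) = ½|û|² − Im(û v̂) + (c−1)|v̂|² − ½; in particular, for every compact subset of ℂ² there is μ₀ < 1 such that K̂_{μ,c} is defined on that set for all μ ∈ (μ₀,1). -/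

import Mathlib

open Filter Topology

/-- The real inner product `⟨a,b⟩ = Re(a·conj b)` on `ℂ`. -/
noncomputable def rinner (a b : ℂ) : ℝ := (a * (starRingEnd ℂ) b).re

/-- The Levi-Civita regularized PCR3BP Hamiltonian
`K_{μ,c}(v,u) = ½|u|² + 2|v|²⟨u,iv⟩ − μ·Im(uv) − (1−μ)/2 − μ|v|²/|2v²−1| + c|v|²`. -/
noncomputable def Kreg (μ c : ℝ) (v u : ℂ) : ℝ :=
  (1 / 2) * ‖u‖ ^ 2 + 2 * ‖v‖ ^ 2 * rinner u (Complex.I * v)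
    - μ * (u * v).im - (1 - μ) / 2 - μ * ‖v‖ ^ 2 / ‖2 * v ^ 2 - 1‖ + c * ‖v‖ ^ 2

/-- The rescaled Hamiltonian `K̂_{μ,c}(v̂,û) = (1/(1−μ)) K_{μ,c}(√(1−μ)v̂, √(1−μ)û)`. -/
noncomputable def KregHat (μ c : ℝ) (v u : ℂ) : ℝ :=
  (1 / (1 - μ)) * Kreg μ c ((Real.sqrt (1 - μ) : ℂ) * v) ((Real.sqrt (1 - μ) : ℂ) * u)

/-!
Written in `ε = 1 - μ`, the rescaled Hamiltonian extends to a function of `(ε, v̂, û)` that is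
continuous near `ε = 0`, because the collision denominator `|2εv̂² − 1|` equals `1` there, and
that equals `F` at `ε = 0`. Continuity along the compact slice `{0} × S` gives, by the tube lemma,
both the uniform convergence on `S` and the absence of collisions on `S` for small `ε`.
-/

open Set

theorem IsCompact.tendstoUniformlyOn_of_continuousAt {ι X Y Z : Type*} [TopologicalSpace X]
    [TopologicalSpace Y] [UniformSpace Z] {f : X → Y → Z} {K : Set Y} (hK : IsCompact K)
    {x₀ : X} (hf : ∀ y ∈ K, ContinuousAt ↿f (x₀, y)) {g : ι → X} {l : Filter ι}
    (hg : Tendsto g l (𝓝 x₀)) :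
    TendstoUniformlyOn (fun i => f (g i)) (f x₀) l K := by
  intro u hu
  obtain ⟨t, ht, ht_symm, htu⟩ := comp_symm_of_uniformity hu
  have hnear : ∀ y ∈ K, ∀ᶠ z : X × Y in 𝓝 (x₀, y), (f x₀ z.2, f z.1 z.2) ∈ u := by
    intro y hy
    have hslice : ContinuousAt (fun z : X × Y => ↿f (x₀, z.2)) (x₀, y) :=
      ContinuousAt.comp (x := (x₀, y)) (hf y hy) (continuousAt_const.prodMk continuousAt_snd)
    have hmove : ∀ᶠ z : X × Y in 𝓝 (x₀, y), (f x₀ y, f z.1 z.2) ∈ t :=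
      hf y hy (mem_nhds_left _ ht)
    have hfix : ∀ᶠ z : X × Y in 𝓝 (x₀, y), (f x₀ y, f x₀ z.2) ∈ t :=
      hslice (mem_nhds_left _ ht)
    filter_upwards [hmove, hfix] with z hz hz'
    exact htu (SetRel.prodMk_mem_comp (ht_symm hz') hz)
  exact hg.eventually
    (hK.eventually_forall_of_forall_eventually (P := fun x y => (f x₀ y, f x y) ∈ u) hnear)

/-- `K̂_{1-ε,c}` (see `KregHat_eq_KregLunar`), which unlike `KregHat` makes sense at `ε = 0`. -/
noncomputable def KregLunar (c ε : ℝ) (v u : ℂ) : ℝ :=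
  (1 / 2) * ‖u‖ ^ 2 + 2 * ε * ‖v‖ ^ 2 * rinner u (Complex.I * v)
    - (1 - ε) * (u * v).im - 1 / 2 - (1 - ε) * ‖v‖ ^ 2 / ‖2 * (ε : ℂ) * v ^ 2 - 1‖
    + c * ‖v‖ ^ 2

theorem KregLunar_zero (c : ℝ) (v u : ℂ) :
    KregLunar c 0 v u = (1 / 2) * ‖u‖ ^ 2 - (u * v).im + (c - 1) * ‖v‖ ^ 2 - 1 / 2 := by
  simp only [KregLunar]
  norm_num
  ring

theorem continuousAt_KregLunar (c : ℝ) (p : ℂ × ℂ) :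
    ContinuousAt (fun q : ℝ × (ℂ × ℂ) => KregLunar c q.1 q.2.1 q.2.2) (0, p) := by
  have hden : ‖2 * ((0 : ℝ) : ℂ) * p.1 ^ 2 - 1‖ ≠ 0 := by simp
  simp only [KregLunar, rinner]
  fun_prop (disch := exact hden)

theorem ofReal_sqrt_mul_sq {ε : ℝ} (hε : 0 ≤ ε) (v : ℂ) :
    ((Real.sqrt ε : ℂ) * v) ^ 2 = (ε : ℂ) * v ^ 2 := by
  rw [mul_pow, ← Complex.ofReal_pow, Real.sq_sqrt hε]

theorem KregHat_eq_KregLunar {μ : ℝ} (hμ : μ < 1) (c : ℝ) (v u : ℂ) :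
    KregHat μ c v u = KregLunar c (1 - μ) v u := by
  have hε : 0 < 1 - μ := sub_pos.mpr hμ
  have hss : Real.sqrt (1 - μ) * Real.sqrt (1 - μ) = 1 - μ := Real.mul_self_sqrt hε.le
  set s := Real.sqrt (1 - μ)
  have hnorm (z : ℂ) : ‖(s : ℂ) * z‖ ^ 2 = (1 - μ) * ‖z‖ ^ 2 := by
    rw [norm_mul, Complex.norm_real, Real.norm_of_nonneg (Real.sqrt_nonneg _), mul_pow, sq, hss]
  have hrinner : rinner ((s : ℂ) * u) (Complex.I * ((s : ℂ) * v))
      = (1 - μ) * rinner u (Complex.I * v) := by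
    simp only [rinner, map_mul, Complex.conj_ofReal]
    rw [show (s : ℂ) * u * (starRingEnd ℂ Complex.I * ((s : ℂ) * starRingEnd ℂ v))
        = ((s * s : ℝ) : ℂ) * (u * (starRingEnd ℂ Complex.I * starRingEnd ℂ v)) by
          push_cast; ring, hss, Complex.re_ofReal_mul]
  have him : ((s : ℂ) * u * ((s : ℂ) * v)).im = (1 - μ) * (u * v).im := by
    rw [mul_mul_mul_comm, ← Complex.ofReal_mul, hss, Complex.im_ofReal_mul]
  rw [KregHat, Kreg, KregLunar, hnorm, hnorm, hrinner, him, mul_assoc 2,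
    ofReal_sqrt_mul_sq hε.le, ← mul_assoc]
  field_simp
  ring

theorem eventually_forall_two_mul_sq_ne_one {K : Set ℂ} (hK : IsCompact K) :
    ∀ᶠ ε : ℝ in 𝓝 0, ∀ v ∈ K, 2 * (ε : ℂ) * v ^ 2 ≠ 1 := by
  refine hK.eventually_forall_of_forall_eventually
    (P := fun (ε : ℝ) v => 2 * (ε : ℂ) * v ^ 2 ≠ 1) fun v _ => ?_
  have hcont : ContinuousAt (fun q : ℝ × ℂ => 2 * (q.1 : ℂ) * q.2 ^ 2) (0, v) := by fun_prop
  exact hcont.eventually_ne (by simp)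

/-- In the lunar limit `μ → 1⁻` the rescaled regularized PCR3BP Hamiltonian
converges uniformly on compact subsets of `ℂ²` to
`F(v̂,û) = ½|û|² − Im(ûv̂) + (c−1)|v̂|² − ½`; moreover on any compact set the
rescaled Hamiltonian is genuinely defined (no collision singularity, i.e.
`2(√(1−μ)v̂)² ≠ 1`) for all `μ` close enough to `1`. -/
theorem rescaled_hamiltonian_lunar_limit (c : ℝ) :
    ∀ S : Set (ℂ × ℂ), IsCompact S →
      TendstoUniformlyOn (fun (μ : ℝ) (p : ℂ × ℂ) => KregHat μ c p.1 p.2)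
        (fun p : ℂ × ℂ =>
          (1 / 2) * ‖p.2‖ ^ 2 - (p.2 * p.1).im + (c - 1) * ‖p.1‖ ^ 2 - 1 / 2)
        (nhdsWithin 1 (Set.Ioo (0:ℝ) 1)) S ∧
      ∀ᶠ μ : ℝ in nhdsWithin 1 (Set.Ioo (0:ℝ) 1),
        ∀ p ∈ S, 2 * ((Real.sqrt (1 - μ) : ℂ) * p.1) ^ 2 ≠ 1 := by
  intro S hS
  have hε : Tendsto (fun μ : ℝ => 1 - μ) (𝓝[Ioo 0 1] 1) (𝓝 0) :=
    ((continuous_const.sub continuous_id).tendsto' 1 0 (sub_self 1)).mono_left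
      nhdsWithin_le_nhds
  have hμ_lt : ∀ᶠ μ : ℝ in 𝓝[Ioo 0 1] 1, μ < 1 :=
    eventually_nhdsWithin_of_forall fun μ hμ => hμ.2
  constructor
  · have hlim := hS.tendstoUniformlyOn_of_continuousAt
      (f := fun ε (p : ℂ × ℂ) => KregLunar c ε p.1 p.2)
      (fun p _ => continuousAt_KregLunar c p) hε
    refine (hlim.congr ?_).congr_right fun p _ => KregLunar_zero c p.1 p.2
    filter_upwards [hμ_lt] with μ hμ p _
    exact (KregHat_eq_KregLunar hμ c p.1 p.2).symm
  · have hregular := hε.eventually (eventually_forall_two_mul_sq_ne_one (hS.image continuous_fst))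
    filter_upwards [hμ_lt, hregular] with μ hμ hsing p hp
    rw [ofReal_sqrt_mul_sq (sub_nonneg.mpr hμ.le), ← mul_assoc]
    exact hsing p.1 (mem_image_of_mem _ hp)
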